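/- arXiv:0906.3652 — 8 statements merged into one kernel-verified Lean document; each statement's English description precedes it below -/
import Mathlib

section
/- For every integer N ≥ 1, the following identity holds: 1 + Σ_{t=1}^{N} Σ_{s=1}^{⌊t/2⌋} C(N-t+s, s) · C(t-s-1, s-1) · 2^{-(t-s)} = (3/2)^{N-1}. (This is the normalizing constant C_N of the averaged generating function for coloured hard-dimers evaluated at u=v=w=1.) -/
/-!
Substituting `m = t - s` turns the double sum into
`∑_{m=1}^{N-1} 2^{-m} ∑_{s=1}^{m} C(N-m, s) C(m-1, s-1)` (the new range also admits pairs with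
`m + s > N`, whose terms vanish). By Vandermonde's identity the inner sum is `C(N-1, m)`, so the
whole expression is `∑_{m=0}^{N-1} C(N-1, m) 2^{-m} = (1/2 + 1)^{N-1}`.
-/

open Finset

theorem Nat.sum_Icc_choose_mul_choose_sub_one (a m : ℕ) (hm : 1 ≤ m) :
    ∑ s ∈ Icc 1 m, a.choose s * (m - 1).choose (s - 1) = (a + m - 1).choose m := by
  rw [Nat.add_sub_assoc hm, Nat.add_choose_eq, Nat.sum_antidiagonal_eq_sum_range_succ_mk,
    range_eq_Ico, sum_eq_sum_Ico_succ_bot (by omega), Nat.sub_zero,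
    Nat.choose_eq_zero_of_lt (by omega : m - 1 < m), mul_zero, zero_add, Nat.succ_eq_add_one,
    Ico_add_one_right_eq_Icc]
  refine sum_congr rfl fun s hs => ?_
  rw [mem_Icc] at hs
  rw [← Nat.choose_symm (by omega : m - s ≤ m - 1), show m - 1 - (m - s) = s - 1 by omega]

theorem sum_Icc_sum_Icc_div_two_eq {M : Type*} [AddCommMonoid M] (N : ℕ) (g : ℕ → ℕ → M)
    (hg : ∀ m s, 0 < s → N < m + s → g m s = 0) :
    ∑ t ∈ Icc 1 N, ∑ s ∈ Icc 1 (t / 2), g (t - s) s =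
      ∑ m ∈ Icc 1 (N - 1), ∑ s ∈ Icc 1 m, g m s := by
  rw [sum_sigma', sum_sigma', ← sum_filter_of_ne (s := (Icc 1 (N - 1)).sigma (Icc 1))
    (p := fun x => x.1 + x.2 ≤ N) fun x hx hne => ?_]
  swap
  · simp only [mem_sigma, mem_Icc] at hx
    exact not_lt.1 fun h => hne (hg x.1 x.2 (by omega) h)
  refine sum_nbij' (fun x => ⟨x.1 - x.2, x.2⟩) (fun x => ⟨x.1 + x.2, x.2⟩) ?_ ?_ ?_ ?_ ?_ <;>
    rintro ⟨t, s⟩ h <;> simp only [mem_filter, mem_sigma, mem_Icc] at h ⊢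
  · omega
  · omega
  · rw [Nat.sub_add_cancel (by omega)]
  · rw [Nat.add_sub_cancel]

theorem add_one_pow_eq_one_add_sum_Icc {R : Type*} [CommSemiring R] (x : R) (n : ℕ) :
    (x + 1) ^ n = 1 + ∑ m ∈ Icc 1 n, (n.choose m : R) * x ^ m := by
  rw [add_pow, range_eq_Ico, sum_eq_sum_Ico_succ_bot n.succ_pos, Nat.succ_eq_add_one,
    Ico_add_one_right_eq_Icc]
  simp only [pow_zero, one_pow, mul_one, Nat.choose_zero_right, Nat.cast_one, mul_comm]

theorem normalizing_constant_general (N : ℕ) :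
    1 + ∑ t ∈ Finset.Icc 1 N, ∑ s ∈ Finset.Icc 1 (t / 2),
        (((N - t + s).choose s : ℝ) * ((t - s - 1).choose (s - 1)) * (1 / 2 : ℝ) ^ (t - s))
      = (3 / 2 : ℝ) ^ (N - 1) := by
  set g : ℕ → ℕ → ℝ := fun m s => (N - m).choose s * (m - 1).choose (s - 1) * (1 / 2 : ℝ) ^ m
  have hsummand : ∀ t ∈ Icc 1 N, ∀ s ∈ Icc 1 (t / 2),
      ((N - t + s).choose s : ℝ) * (t - s - 1).choose (s - 1) * (1 / 2 : ℝ) ^ (t - s) =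
        g (t - s) s := by
    intro t ht s hs
    rw [mem_Icc] at ht hs
    rw [show N - t + s = N - (t - s) by omega]
  have hvanish : ∀ m s, 0 < s → N < m + s → g m s = 0 := fun m s _ h => by
    simp [g, Nat.choose_eq_zero_of_lt (by omega : N - m < s)]
  have hvandermonde : ∀ m ∈ Icc 1 (N - 1),
      ∑ s ∈ Icc 1 m, g m s = ((N - 1).choose m : ℝ) * (1 / 2 : ℝ) ^ m := by
    intro m hm
    rw [mem_Icc] at hm
    have h := Nat.sum_Icc_choose_mul_choose_sub_one (N - m) m hm.1
    rw [show N - m + m - 1 = N - 1 by omega] at h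
    rw [← sum_mul]
    exact_mod_cast congrArg ((· * (1 / 2 : ℝ) ^ m) ∘ Nat.cast) h
  rw [sum_congr rfl fun t ht => sum_congr rfl (hsummand t ht),
    sum_Icc_sum_Icc_div_two_eq N g hvanish, sum_congr rfl hvandermonde,
    show (3 / 2 : ℝ) = 1 / 2 + 1 by norm_num, add_one_pow_eq_one_add_sum_Icc]

/-- For every integer N ≥ 1,
`1 + Σ_{t=1}^{N} Σ_{s=1}^{⌊t/2⌋} C(N-t+s, s) · C(t-s-1, s-1) · 2^{-(t-s)} = (3/2)^{N-1}`. -/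
theorem normalizing_constant (N : ℕ) (hN : 1 ≤ N) :
    1 + ∑ t ∈ Finset.Icc 1 N, ∑ s ∈ Finset.Icc 1 (t / 2),
        (((N - t + s).choose s : ℝ) * ((t - s - 1).choose (s - 1)) * (1 / 2 : ℝ) ^ (t - s))
      = (3 / 2 : ℝ) ^ (N - 1) :=
  normalizing_constant_general N
end

section
/- For every integer N ≥ 1 and every integer k with 1 ≤ k ≤ N, one has Σ_{s≥0} P̃_N(s, N-k+s) = C(N-1, k-1) · (2/3)^{k-1} · (1/3)^{N-k}. In other words, the random variable n_b+n_r+γ_b+γ_r (the total number of dimers and single points, equal to k = N-t+s) has, after shifting by 1, the binomial distribution B(N-1, 2/3). -/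
/-!
Along the line `t = N - k + s` the weight `P̃_N(s, t)` is, for `k < N` and `s ≥ 1`,
`(2/3)^(N-1) 2^(-(N-k)) C(k, s) C(N-k-1, s-1)`, and Vandermonde's identity sums
`C(k, s) C(N-k-1, s-1)` over `s` to `C(N-1, k-1)`; finally
`(2/3)^(N-1) 2^(-(N-k)) = (2/3)^(k-1) (1/3)^(N-k)`.
For `k = N` the line is the diagonal `t = s`, on which only `P̃_N(0, 0)` is nonzero.
-/

/-- The hard-dimer probability weights `P̃_N(s,t)`:
`P̃_N(0,0) = (2/3)^{N-1}`,
`P̃_N(s,t) = (2/3)^{N-1} · C(N-t+s, s) · C(t-s-1, s-1) · 2^{-(t-s)}`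
for `1 ≤ s ≤ ⌊t/2⌋` and `1 ≤ t ≤ N`, and `P̃_N(s,t) = 0` otherwise. -/
noncomputable def Ptilde (N s t : ℕ) : ℝ :=
  if s = 0 ∧ t = 0 then (2 / 3 : ℝ) ^ (N - 1)
  else if 1 ≤ s ∧ s ≤ t / 2 ∧ 1 ≤ t ∧ t ≤ N then
    (2 / 3 : ℝ) ^ (N - 1) * ((N - t + s).choose s : ℝ)
      * ((t - s - 1).choose (s - 1) : ℝ) * (1 / 2 : ℝ) ^ (t - s)
  else 0

theorem Nat.sum_range_choose_succ_mul_choose (a d : ℕ) :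
    ∑ j ∈ Finset.range (a + 1), (a + 1).choose (j + 1) * d.choose j = (a + 1 + d).choose a := by
  rw [add_comm _ d, Nat.add_choose_eq,
    Finset.Nat.sum_antidiagonal_eq_sum_range_succ fun i j => d.choose i * (a + 1).choose j]
  refine Finset.sum_congr rfl fun j hj => ?_
  rw [Finset.mem_range] at hj
  rw [mul_comm, ← Nat.choose_symm (by omega : a - j ≤ a + 1)]
  congr 2
  omega

namespace Ptilde

variable {N s t : ℕ}

theorem zero_zero : Ptilde N 0 0 = (2 / 3 : ℝ) ^ (N - 1) := by
  simp [Ptilde]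

theorem zero_left (ht : t ≠ 0) : Ptilde N 0 t = 0 := by
  unfold Ptilde
  rw [if_neg (by omega), if_neg (by omega)]

theorem eq_zero_of_lt (h : N < t) : Ptilde N s t = 0 := by
  unfold Ptilde
  rw [if_neg (by omega), if_neg (by omega)]

theorem eq_zero_of_lt_two_mul (h : t < 2 * s) : Ptilde N s t = 0 := by
  unfold Ptilde
  rw [if_neg (by omega), if_neg (by omega)]

/-- For `t < 2 s` the factor `C(t-s-1, s-1)` vanishes. -/
theorem eq_of_pos (hs : 1 ≤ s) (hst : s < t) (htN : t ≤ N) :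
    Ptilde N s t = (2 / 3 : ℝ) ^ (N - 1) * ((N - t + s).choose s : ℝ)
      * ((t - s - 1).choose (s - 1) : ℝ) * (1 / 2 : ℝ) ^ (t - s) := by
  unfold Ptilde
  rw [if_neg (by omega)]
  by_cases h : 2 * s ≤ t
  · rw [if_pos (by omega)]
  · rw [if_neg (by omega), Nat.choose_eq_zero_of_lt (by omega : t - s - 1 < s - 1)]
    simp

theorem tsum_diagonal (N : ℕ) : ∑' s, Ptilde N s s = (2 / 3 : ℝ) ^ (N - 1) := by
  rw [tsum_eq_single 0 fun s hs => eq_zero_of_lt_two_mul (by omega), zero_zero]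

theorem tsum_off_diagonal (a d : ℕ) :
    ∑' s, Ptilde (a + 1 + (d + 1)) s (d + 1 + s)
      = (2 / 3 : ℝ) ^ (a + 1 + d) * (1 / 2 : ℝ) ^ (d + 1) * ((a + 1 + d).choose a : ℝ) := by
  have hsupp : ∀ s ∉ Finset.range (a + 2), Ptilde (a + 1 + (d + 1)) s (d + 1 + s) = 0 :=
    fun s hs => eq_zero_of_lt (by rw [Finset.mem_range] at hs; omega)
  have hterm : ∀ j ∈ Finset.range (a + 1), Ptilde (a + 1 + (d + 1)) (j + 1) (d + 1 + (j + 1))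
      = (2 / 3 : ℝ) ^ (a + 1 + d) * (1 / 2 : ℝ) ^ (d + 1)
        * (((a + 1).choose (j + 1) * d.choose j : ℕ) : ℝ) := by
    intro j hj
    rw [Finset.mem_range] at hj
    rw [eq_of_pos (by omega) (by omega) (by omega), show a + 1 + (d + 1) - 1 = a + 1 + d by omega,
      show a + 1 + (d + 1) - (d + 1 + (j + 1)) + (j + 1) = a + 1 by omega,
      show d + 1 + (j + 1) - (j + 1) = d + 1 by omega, Nat.add_sub_cancel, Nat.add_sub_cancel]
    push_cast
    ring
  rw [tsum_eq_sum hsupp, Finset.sum_range_succ', zero_left (by omega), add_zero,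
    Finset.sum_congr rfl hterm, ← Finset.mul_sum, ← Nat.cast_sum,
    Nat.sum_range_choose_succ_mul_choose]

end Ptilde

theorem dimers_and_single_points_binomial_general (N k : ℕ) (hk1 : 1 ≤ k) (hkN : k ≤ N) :
    ∑' s : ℕ, Ptilde N s (N - k + s)
      = ((N - 1).choose (k - 1) : ℝ) * (2 / 3 : ℝ) ^ (k - 1) * (1 / 3 : ℝ) ^ (N - k) := by
  obtain ⟨a, rfl⟩ := Nat.exists_eq_add_of_le' hk1
  obtain ⟨d, rfl⟩ := Nat.exists_eq_add_of_le hkN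
  rw [Nat.add_sub_cancel_left, Nat.add_sub_cancel]
  rcases d with _ | d
  · simpa using Ptilde.tsum_diagonal (a + 1)
  · rw [Ptilde.tsum_off_diagonal, show a + 1 + (d + 1) - 1 = a + 1 + d by omega,
      show a + 1 + d = a + (d + 1) by omega, pow_add, mul_assoc _ ((2 / 3 : ℝ) ^ (d + 1)),
      ← mul_pow, show (2 / 3 : ℝ) * (1 / 2) = 1 / 3 by norm_num]
    ring

/-- the total number of dimers and single points `k = N-t+s` has,
after shifting by 1, the binomial distribution `B(N-1, 2/3)`. -/
theorem dimers_and_single_points_binomial (N k : ℕ) (hN : 1 ≤ N) (hk1 : 1 ≤ k) (hkN : k ≤ N) :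
    ∑' s : ℕ, Ptilde N s (N - k + s)
      = ((N - 1).choose (k - 1) : ℝ) * (2 / 3 : ℝ) ^ (k - 1) * (1 / 3 : ℝ) ^ (N - k) :=
  dimers_and_single_points_binomial_general N k hk1 hkN
end

section
/- A local central limit theorem (De Moivre–Laplace) holds for the total number of dimers and single points: for every A > 0 and every ε > 0 there exists N₀ such that for all integers N ≥ N₀ and all integers k satisfying |k - (2/3)(N-1)| ≤ A·√((2/9)(N-1)), one has | Q_N(k) · √((4/9)π(N-1)) · exp( (k - (2/3)(N-1))² / ((4/9)(N-1)) ) - 1 | < ε, where Q_N(k) := Σ_{s≥0} P̃_N(s, N-k+s). -/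
open Real Filter Topology Asymptotics Finset

lemma Nat.sum_range_choose_succ_mul_choose_s2 (n k : ℕ) :
    ∑ i ∈ range (k + 1), (k + 1).choose (i + 1) * n.choose i = (n + (k + 1)).choose k := by
  rw [Nat.add_choose_eq, Finset.Nat.sum_antidiagonal_eq_sum_range_succ_mk]
  refine sum_congr rfl fun i hi => ?_
  rw [mul_comm, Nat.choose_symm_of_eq_add (by simp at hi; omega : k + 1 = (k - i) + (i + 1))]

lemma Ptilde_eq_zero_of_lt {N s t : ℕ} (h : N < t) : Ptilde N s t = 0 := by
  unfold Ptilde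
  rw [if_neg (by omega), if_neg (by omega)]

lemma Ptilde_succ_of_lt {N k : ℕ} (hkN : k < N) (i : ℕ) :
    Ptilde N (i + 1) (N - k + (i + 1))
      = (2 / 3) ^ (N - 1) * (k.choose (i + 1) * (N - k - 1).choose i : ℕ) * (1 / 2) ^ (N - k) := by
  unfold Ptilde
  rw [if_neg (by omega)]
  split_ifs with h
  · rw [show N - (N - k + (i + 1)) + (i + 1) = k by omega,
      show N - k + (i + 1) - (i + 1) = N - k by omega, Nat.add_sub_cancel]
    push_cast
    ring
  · rw [Nat.le_div_iff_mul_le two_pos] at h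
    rcases le_or_gt (i + 1) k with hik | hik
    · rw [Nat.choose_eq_zero_of_lt (n := N - k - 1) (by omega)]
      simp
    · rw [Nat.choose_eq_zero_of_lt hik]
      simp

lemma tsum_Ptilde_eq {N k : ℕ} (hk : 1 ≤ k) (hkN : k ≤ N) :
    ∑' s, Ptilde N s (N - k + s)
      = (N - 1).choose (k - 1) * (2 / 3) ^ (k - 1) * (1 / 3) ^ (N - k) := by
  rw [tsum_eq_sum (s := range (k + 1))
    fun s hs => Ptilde_eq_zero_of_lt (by simp only [mem_range] at hs; omega), sum_range_succ']
  rcases hkN.lt_or_eq with hlt | rfl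
  · obtain ⟨k, rfl⟩ : ∃ k', k = k' + 1 := ⟨k - 1, by omega⟩
    have hzero : Ptilde N 0 (N - (k + 1) + 0) = 0 := by
      unfold Ptilde; rw [if_neg (by omega), if_neg (by omega)]
    simp_rw [Ptilde_succ_of_lt hlt, ← sum_mul, ← mul_sum, ← Nat.cast_sum,
      Nat.sum_range_choose_succ_mul_choose_s2, hzero, add_zero,
      show N - (k + 1) - 1 + (k + 1) = N - 1 by omega, Nat.add_sub_cancel]
    rw [show N - 1 = k + (N - (k + 1)) by omega, pow_add,
      show (1 / 3 : ℝ) = 2 / 3 * (1 / 2) by norm_num, mul_pow]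
    ring
  · have hzero : ∀ i ∈ range k, Ptilde k (i + 1) (k - k + (i + 1)) = 0 := fun i _ => by
      unfold Ptilde
      rw [if_neg (by omega), if_neg (by rw [Nat.le_div_iff_mul_le two_pos]; omega)]
    rw [sum_eq_zero hzero, zero_add, Nat.sub_self, Nat.choose_self]
    simp [Ptilde]

lemma abs_one_add_mul_log_one_add_sub_le {u : ℝ} (hu : |u| ≤ 1 / 2) :
    |(1 + u) * log (1 + u) - u - u ^ 2 / 2| ≤ 4 * |u| ^ 3 := by
  have hu' := abs_le.1 hu
  have hlog : |log (1 + u) - u + u ^ 2 / 2| ≤ 2 * |u| ^ 3 := by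
    have h := abs_log_sub_add_sum_range_le (x := -u) (by rw [abs_neg]; linarith) 2
    simp only [Finset.sum_range_succ, Finset.sum_range_zero, abs_neg, sub_neg_eq_add] at h
    calc |log (1 + u) - u + u ^ 2 / 2|
        = |0 + (-u) ^ (0 + 1) / ((0 : ℕ) + 1) + (-u) ^ (1 + 1) / ((1 : ℕ) + 1) + log (1 + u)| := by
          congr 1; push_cast; ring
      _ ≤ |u| ^ 3 / (1 - |u|) := h
      _ ≤ 2 * |u| ^ 3 := by
          rw [div_le_iff₀ (by linarith)]
          nlinarith [pow_nonneg (abs_nonneg u) 3]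
  calc |(1 + u) * log (1 + u) - u - u ^ 2 / 2|
      = |(1 + u) * (log (1 + u) - u + u ^ 2 / 2) - u ^ 3 / 2| := by ring_nf
    _ ≤ |1 + u| * |log (1 + u) - u + u ^ 2 / 2| + |u| ^ 3 / 2 := by
        rw [← abs_mul]
        refine (abs_sub _ _).trans (le_of_eq ?_)
        rw [abs_div, abs_pow]; norm_num
    _ ≤ 3 / 2 * (2 * |u| ^ 3) + |u| ^ 3 / 2 := by
        gcongr
        rw [abs_le]; constructor <;> linarith
    _ ≤ 4 * |u| ^ 3 := by nlinarith [pow_nonneg (abs_nonneg u) 3]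

lemma abs_add_mul_log_add_div_sub_le {a y : ℝ} (ha : 0 < a) (hy : |y| ≤ a / 2) :
    |(a + y) * log ((a + y) / a) - y - y ^ 2 / (2 * a)| ≤ 4 * |y| ^ 3 / a ^ 2 := by
  have hu : |y / a| ≤ 1 / 2 := by
    rw [abs_div, abs_of_pos ha, div_le_iff₀ ha]; linarith
  have hua : 1 + y / a = (a + y) / a := by field_simp
  calc |(a + y) * log ((a + y) / a) - y - y ^ 2 / (2 * a)|
      = a * |(1 + y / a) * log (1 + y / a) - y / a - (y / a) ^ 2 / 2| := by
        rw [← abs_of_pos ha, ← abs_mul, abs_of_pos ha, hua]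
        congr 1; field_simp
    _ ≤ a * (4 * |y / a| ^ 3) := by gcongr; exact abs_one_add_mul_log_one_add_sub_le hu
    _ = 4 * |y| ^ 3 / a ^ 2 := by rw [abs_div, abs_of_pos ha]; field_simp

/-- With `j = p m + y`, the left side is `m · D(Ber(j / m) ‖ Ber(p))` minus its quadratic part. -/
lemma abs_entropy_sub_sq_le {m p y : ℝ} (hm : 0 < m) (hp0 : 0 < p) (hp1 : p < 1)
    (hyp : |y| ≤ p * m / 2) (hyq : |y| ≤ (1 - p) * m / 2) :
    |(p * m + y) * log ((p * m + y) / (p * m))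
        + ((1 - p) * m - y) * log (((1 - p) * m - y) / ((1 - p) * m))
        - y ^ 2 / (2 * p * (1 - p) * m)|
      ≤ 4 * (1 / p ^ 2 + 1 / (1 - p) ^ 2) * |y| ^ 3 / m ^ 2 := by
  have hq0 : 0 < 1 - p := by linarith
  have h1 := abs_add_mul_log_add_div_sub_le (mul_pos hp0 hm) hyp
  have h2 := abs_add_mul_log_add_div_sub_le (y := -y) (mul_pos hq0 hm) (by rwa [abs_neg])
  rw [abs_neg, ← sub_eq_add_neg] at h2
  calc _ = |((p * m + y) * log ((p * m + y) / (p * m)) - y - y ^ 2 / (2 * (p * m)))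
          + (((1 - p) * m - y) * log (((1 - p) * m - y) / ((1 - p) * m)) - -y
            - (-y) ^ 2 / (2 * ((1 - p) * m)))| := by
        congr 1; field_simp; ring
    _ ≤ 4 * |y| ^ 3 / (p * m) ^ 2 + 4 * |y| ^ 3 / ((1 - p) * m) ^ 2 :=
        (abs_add_le _ _).trans (add_le_add h1 h2)
    _ = _ := by field_simp

noncomputable def stirlingFormula (n : ℕ) : ℝ := √(2 * n * π) * (n / exp 1) ^ n

lemma stirlingFormula_ratio_mul_eq {m j : ℕ} (hj : 0 < j) (hjm : j < m) {p : ℝ} (hp0 : 0 < p)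
    (hp1 : p < 1) :
    stirlingFormula m / (stirlingFormula j * stirlingFormula (m - j)) * p ^ j * (1 - p) ^ (m - j)
        * √(2 * π * p * (1 - p) * m)
      = √(p * (1 - p) * m ^ 2 / (j * (m - j)))
        * exp (-(j * log (j / (p * m)) + (m - j) * log ((m - j) / ((1 - p) * m)))) := by
  obtain ⟨r, rfl⟩ : ∃ r, m = j + r := ⟨m - j, by omega⟩
  have hr : 0 < r := by omega
  simp only [stirlingFormula, Nat.add_sub_cancel_left]
  push_cast
  rw [add_sub_cancel_left, exp_neg, exp_add, exp_nat_mul, exp_nat_mul,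
    exp_log (by positivity), exp_log (by positivity)]
  have hsqrt : √(2 * (j + r) * π) / (√(2 * j * π) * √(2 * r * π)) * √(2 * π * p * (1 - p) * (j + r))
      = √(p * (1 - p) * (j + r) ^ 2 / (j * r)) := by
    rw [← sqrt_mul (by positivity), ← sqrt_div (by positivity), ← sqrt_mul (by positivity)]
    congr 1
    field_simp
  have hpow : ((j + r : ℝ) / exp 1) ^ (j + r) / ((j / exp 1) ^ j * (r / exp 1) ^ r)
      * p ^ j * (1 - p) ^ r = ((j / (p * (j + r))) ^ j * (r / ((1 - p) * (j + r))) ^ r)⁻¹ := by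
    rw [mul_inv, ← inv_pow, ← inv_pow, inv_div, inv_div, pow_add]
    simp only [div_pow, mul_pow]
    field_simp
  calc _ = √(2 * (j + r) * π) / (√(2 * j * π) * √(2 * r * π)) * √(2 * π * p * (1 - p) * (j + r))
        * (((j + r : ℝ) / exp 1) ^ (j + r) / ((j / exp 1) ^ j * (r / exp 1) ^ r)
          * p ^ j * (1 - p) ^ r) := by ring
    _ = _ := by rw [hsqrt, hpow]

lemma isEquivalent_choose_stirlingFormula {l : Filter (ℕ × ℕ)} (hj : Tendsto Prod.snd l atTop)
    (hr : Tendsto (fun x : ℕ × ℕ => x.1 - x.2) l atTop) :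
    (fun x : ℕ × ℕ => (x.1.choose x.2 : ℝ)) ~[l]
      fun x => stirlingFormula x.1 / (stirlingFormula x.2 * stirlingFormula (x.1 - x.2)) := by
  have hm : Tendsto Prod.fst l atTop := tendsto_atTop_mono (fun x => Nat.sub_le x.1 x.2) hr
  have hS := Stirling.factorial_isEquivalent_stirling
  refine ((hS.comp_tendsto hm).div ((hS.comp_tendsto hj).mul (hS.comp_tendsto hr))).congr_left ?_
  filter_upwards [hr.eventually_gt_atTop 0] with x hx
  exact (Nat.cast_choose ℝ (by omega)).symm

def binomialWindow (p A : ℝ) : Filter (ℕ × ℕ) :=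
  comap Prod.fst atTop ⊓ 𝓟 {x | |(x.2 : ℝ) - p * x.1| ≤ A * √x.1}

section binomialWindow

variable {p A : ℝ}

lemma tendsto_fst_binomialWindow : Tendsto Prod.fst (binomialWindow p A) atTop :=
  tendsto_comap.mono_left inf_le_left

lemma tendsto_natCast_fst_binomialWindow :
    Tendsto (fun x : ℕ × ℕ => (x.1 : ℝ)) (binomialWindow p A) atTop :=
  tendsto_natCast_atTop_atTop.comp tendsto_fst_binomialWindow

lemma eventually_abs_sub_le_binomialWindow :
    ∀ᶠ x in binomialWindow p A, |(x.2 : ℝ) - p * x.1| ≤ A * √x.1 :=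
  mem_inf_of_right (mem_principal_self _)

lemma tendsto_sub_div_binomialWindow :
    Tendsto (fun x : ℕ × ℕ => ((x.2 : ℝ) - p * x.1) / x.1) (binomialWindow p A) (𝓝 0) := by
  have hbound : Tendsto (fun x : ℕ × ℕ => A * (√x.1)⁻¹) (binomialWindow p A) (𝓝 0) := by
    simpa using (tendsto_inv_atTop_zero.comp
      (tendsto_sqrt_atTop.comp tendsto_natCast_fst_binomialWindow)).const_mul A
  refine squeeze_zero_norm' ?_ hbound
  filter_upwards [eventually_abs_sub_le_binomialWindow,
    tendsto_natCast_fst_binomialWindow.eventually_gt_atTop 0] with x hx hm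
  rw [norm_div, norm_of_nonneg hm.le, Real.norm_eq_abs, div_le_iff₀ hm]
  calc |(x.2 : ℝ) - p * x.1| ≤ A * √x.1 := hx
    _ = A * (√x.1)⁻¹ * x.1 := by
      rw [mul_assoc, ← Real.sqrt_div_self, div_mul_cancel₀ _ hm.ne']

lemma tendsto_abs_sub_pow_three_div_sq_binomialWindow :
    Tendsto (fun x : ℕ × ℕ => |(x.2 : ℝ) - p * x.1| ^ 3 / (x.1 : ℝ) ^ 2)
      (binomialWindow p A) (𝓝 0) := by
  have hbound := (tendsto_sub_div_binomialWindow (p := p) (A := A)).abs.const_mul (A ^ 2)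
  rw [abs_zero, mul_zero] at hbound
  refine squeeze_zero' (Eventually.of_forall fun x => by positivity) ?_ hbound
  filter_upwards [eventually_abs_sub_le_binomialWindow,
    tendsto_natCast_fst_binomialWindow.eventually_gt_atTop 0] with x hx hm
  have hsq : |(x.2 : ℝ) - p * x.1| ^ 2 ≤ A ^ 2 * x.1 := by
    calc _ ≤ (A * √x.1) ^ 2 := pow_le_pow_left₀ (abs_nonneg _) hx 2
      _ = A ^ 2 * x.1 := by rw [mul_pow, sq_sqrt hm.le]
  rw [abs_div, abs_of_pos hm, div_le_iff₀ (by positivity)]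
  calc |(x.2 : ℝ) - p * x.1| ^ 3 = |(x.2 : ℝ) - p * x.1| ^ 2 * |(x.2 : ℝ) - p * x.1| := by ring
    _ ≤ A ^ 2 * x.1 * |(x.2 : ℝ) - p * x.1| := by gcongr
    _ = _ := by field_simp

lemma tendsto_snd_div_fst_binomialWindow :
    Tendsto (fun x : ℕ × ℕ => (x.2 : ℝ) / x.1) (binomialWindow p A) (𝓝 p) := by
  have h := (tendsto_sub_div_binomialWindow (p := p) (A := A)).const_add p
  rw [add_zero] at h
  refine h.congr' ?_
  filter_upwards [tendsto_natCast_fst_binomialWindow.eventually_gt_atTop 0] with x hm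
  field_simp
  ring

lemma tendsto_snd_binomialWindow (hp : 0 < p) : Tendsto Prod.snd (binomialWindow p A) atTop := by
  rw [← tendsto_natCast_atTop_iff (R := ℝ)]
  refine (tendsto_natCast_fst_binomialWindow.atTop_mul_pos hp
    tendsto_snd_div_fst_binomialWindow).congr' ?_
  filter_upwards [tendsto_natCast_fst_binomialWindow.eventually_gt_atTop 0] with x hm
  field_simp

lemma tendsto_fst_sub_snd_binomialWindow (hp : p < 1) :
    Tendsto (fun x : ℕ × ℕ => x.1 - x.2) (binomialWindow p A) atTop := by
  rw [← tendsto_natCast_atTop_iff (R := ℝ)]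
  have h := tendsto_natCast_fst_binomialWindow.atTop_mul_pos (sub_pos.2 hp)
    (tendsto_const_nhds.sub (tendsto_snd_div_fst_binomialWindow (p := p) (A := A)))
  refine tendsto_atTop_mono' _ ?_ h
  filter_upwards [tendsto_natCast_fst_binomialWindow.eventually_gt_atTop 0] with x hm
  have hle : ((x.1 : ℕ) : ℝ) ≤ ((x.1 - x.2 + x.2 : ℕ) : ℝ) := by exact_mod_cast le_tsub_add
  push_cast at hle
  field_simp
  linarith

lemma tendsto_entropy_sub_sq_binomialWindow (hp0 : 0 < p) (hp1 : p < 1) :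
    Tendsto (fun x : ℕ × ℕ => (x.2 : ℝ) * log (x.2 / (p * x.1))
        + ((x.1 : ℝ) - x.2) * log ((x.1 - x.2) / ((1 - p) * x.1))
        - ((x.2 : ℝ) - p * x.1) ^ 2 / (2 * p * (1 - p) * x.1)) (binomialWindow p A) (𝓝 0) := by
  have hbound := (tendsto_abs_sub_pow_three_div_sq_binomialWindow (p := p) (A := A)).const_mul
    (4 * (1 / p ^ 2 + 1 / (1 - p) ^ 2))
  rw [mul_zero] at hbound
  refine squeeze_zero_norm' ?_ hbound
  have hmin : 0 < min p (1 - p) / 2 := by positivity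
  filter_upwards [tendsto_natCast_fst_binomialWindow.eventually_gt_atTop 0,
    tendsto_sub_div_binomialWindow.abs.eventually_lt_const (by rwa [abs_zero])] with x hm hy
  rw [abs_div, abs_of_pos hm, div_lt_iff₀ hm] at hy
  have h := abs_entropy_sub_sq_le (y := (x.2 : ℝ) - p * x.1) hm hp0 hp1
    (by nlinarith [min_le_left p (1 - p)]) (by nlinarith [min_le_right p (1 - p)])
  rw [add_sub_cancel, show (1 - p) * x.1 - (x.2 - p * x.1) = (x.1 : ℝ) - x.2 by ring] at h
  rwa [Real.norm_eq_abs, ← mul_div_assoc]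

theorem tendsto_binomial_local_clt (hp0 : 0 < p) (hp1 : p < 1) :
    Tendsto (fun x : ℕ × ℕ => (x.1.choose x.2 : ℝ) * p ^ x.2 * (1 - p) ^ (x.1 - x.2)
        * √(2 * π * p * (1 - p) * x.1)
        * exp (((x.2 : ℝ) - p * x.1) ^ 2 / (2 * p * (1 - p) * x.1)))
      (binomialWindow p A) (𝓝 1) := by
  have hj := tendsto_snd_binomialWindow (A := A) hp0
  have hr := tendsto_fst_sub_snd_binomialWindow (A := A) hp1
  have hequiv := (isEquivalent_choose_stirlingFormula hj hr).mul (IsEquivalent.refl (u :=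
    fun x : ℕ × ℕ => p ^ x.2 * (1 - p) ^ (x.1 - x.2) * √(2 * π * p * (1 - p) * x.1)
      * exp (((x.2 : ℝ) - p * x.1) ^ 2 / (2 * p * (1 - p) * x.1))))
  refine (hequiv.symm.tendsto_nhds ?_).congr fun x => by simp only [Pi.mul_apply]; ring
  have hsqrt : Tendsto (fun x : ℕ × ℕ => √(p * (1 - p) / ((x.2 / x.1) * (1 - x.2 / x.1))))
      (binomialWindow p A) (𝓝 1) := by
    have hpq : p * (1 - p) ≠ 0 := (mul_pos hp0 (sub_pos.2 hp1)).ne'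
    have h : Tendsto (fun x : ℕ × ℕ => √(p * (1 - p) / ((x.2 / x.1) * (1 - x.2 / x.1))))
        (binomialWindow p A) (𝓝 √(p * (1 - p) / (p * (1 - p)))) :=
      (tendsto_const_nhds.div (tendsto_snd_div_fst_binomialWindow.mul
        (tendsto_const_nhds.sub tendsto_snd_div_fst_binomialWindow)) hpq).sqrt
    rwa [div_self hpq, sqrt_one] at h
  have hexp := (tendsto_entropy_sub_sq_binomialWindow hp0 hp1 (A := A)).neg.rexp
  rw [neg_zero, exp_zero] at hexp
  have hprod := hsqrt.mul hexp
  rw [mul_one] at hprod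
  refine hprod.congr' ?_
  filter_upwards [hj.eventually_gt_atTop 0, hr.eventually_gt_atTop 0] with x hj0 hr0
  have hm : (0 : ℝ) < x.1 := by norm_cast; omega
  simp only [Pi.mul_apply]
  rw [← mul_assoc, ← mul_assoc, ← mul_assoc, stirlingFormula_ratio_mul_eq hj0 (by omega) hp0 hp1,
    mul_assoc _ (exp _) (exp _), ← exp_add]
  congr 2
  · field_simp
  · ring

theorem tendsto_binomial_local_clt_add_const (c : ℝ) (hp0 : 0 < p) (hp1 : p < 1) :
    Tendsto (fun x : ℕ × ℕ => (x.1.choose x.2 : ℝ) * p ^ x.2 * (1 - p) ^ (x.1 - x.2)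
        * √(2 * π * p * (1 - p) * x.1)
        * exp (((x.2 : ℝ) + c - p * x.1) ^ 2 / (2 * p * (1 - p) * x.1)))
      (binomialWindow p A) (𝓝 1) := by
  have hshift : Tendsto (fun x : ℕ × ℕ =>
      (2 * c * (((x.2 : ℝ) - p * x.1) / x.1) + c ^ 2 * (x.1 : ℝ)⁻¹) / (2 * p * (1 - p)))
      (binomialWindow p A) (𝓝 0) := by
    have hinv := tendsto_inv_atTop_zero.comp (tendsto_natCast_fst_binomialWindow (p := p) (A := A))
    simpa using ((tendsto_sub_div_binomialWindow.const_mul (2 * c)).add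
      (hinv.const_mul (c ^ 2))).div_const (2 * p * (1 - p))
  have h := (tendsto_binomial_local_clt hp0 hp1).mul hshift.rexp
  rw [exp_zero, mul_one] at h
  refine h.congr' ?_
  filter_upwards [tendsto_natCast_fst_binomialWindow.eventually_gt_atTop 0] with x hm
  rw [mul_assoc _ (exp _) (exp _), ← exp_add]
  congr 2
  field_simp
  ring

end binomialWindow

lemma tendsto_pred_pred_binomialWindow {p c A : ℝ} (hA : 0 ≤ A) (hc : c ≤ 1) :
    Tendsto (fun x : ℕ × ℕ => (x.1 - 1, x.2 - 1))
      (comap Prod.fst atTop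
        ⊓ 𝓟 {x | |(x.2 : ℝ) - p * ((x.1 : ℝ) - 1)| ≤ A * √(c * ((x.1 : ℝ) - 1))})
      (binomialWindow p (A + 1)) := by
  refine tendsto_inf.2 ⟨tendsto_comap_iff.2 ?_, tendsto_principal.2 ?_⟩
  · exact (tendsto_sub_atTop_nat 1).comp (tendsto_comap.mono_left inf_le_left)
  filter_upwards [(tendsto_comap.mono_left inf_le_left).eventually_ge_atTop 2,
    mem_inf_of_right (mem_principal_self _)] with x hm hx
  have hm' : ((x.1 - 1 : ℕ) : ℝ) = (x.1 : ℝ) - 1 := by rw [Nat.cast_sub (by omega), Nat.cast_one]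
  have hk : |((x.2 - 1 : ℕ) : ℝ) - x.2| ≤ 1 := by
    rcases Nat.eq_zero_or_pos x.2 with h | h
    · simp [h]
    · rw [Nat.cast_sub h, Nat.cast_one]; norm_num
  have hm1 : (1 : ℝ) ≤ (x.1 : ℝ) - 1 := by rw [← hm']; exact_mod_cast (by omega : 1 ≤ x.1 - 1)
  have hsqrt : √(c * ((x.1 : ℝ) - 1)) ≤ √((x.1 : ℝ) - 1) :=
    Real.sqrt_le_sqrt (mul_le_of_le_one_left (by linarith) hc)
  have hsqrt1 : 1 ≤ √((x.1 : ℝ) - 1) := Real.one_le_sqrt.2 hm1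
  rw [hm']
  calc |((x.2 - 1 : ℕ) : ℝ) - p * ((x.1 : ℝ) - 1)|
      ≤ |((x.2 - 1 : ℕ) : ℝ) - x.2| + |(x.2 : ℝ) - p * ((x.1 : ℝ) - 1)| := abs_sub_le _ _ _
    _ ≤ 1 + A * √((x.1 : ℝ) - 1) := add_le_add hk (hx.trans (mul_le_mul_of_nonneg_left hsqrt hA))
    _ ≤ (A + 1) * √((x.1 : ℝ) - 1) := by linarith

lemma exists_forall_abs_sub_lt_of_tendsto {f : ℕ × ℕ → ℝ} {S : Set (ℕ × ℕ)} {a ε : ℝ}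
    (h : Tendsto f (comap Prod.fst atTop ⊓ 𝓟 S) (𝓝 a)) (hε : 0 < ε) :
    ∃ N₀, ∀ N, N₀ ≤ N → ∀ k, (N, k) ∈ S → |f (N, k) - a| < ε := by
  have h' := eventually_inf_principal.1 (Metric.tendsto_nhds.1 h ε hε)
  obtain ⟨N₀, hN₀⟩ := eventually_atTop.1 (eventually_comap.1 h')
  exact ⟨N₀, fun N hN k hk => hN₀ N hN (N, k) rfl hk⟩

/-- local CLT (De Moivre–Laplace) for the total number of dimers
and single points, `Q_N(k) := Σ_{s≥0} P̃_N(s, N-k+s)`. -/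
theorem clt_dimers_and_single_points :
    ∀ A > (0 : ℝ), ∀ ε > (0 : ℝ), ∃ N₀ : ℕ, ∀ N : ℕ, N₀ ≤ N → ∀ k : ℕ,
      |(k : ℝ) - 2 / 3 * ((N : ℝ) - 1)| ≤ A * Real.sqrt (2 / 9 * ((N : ℝ) - 1)) →
      |(∑' s : ℕ, Ptilde N s (N - k + s))
          * Real.sqrt (4 / 9 * Real.pi * ((N : ℝ) - 1))
          * Real.exp (((k : ℝ) - 2 / 3 * ((N : ℝ) - 1)) ^ 2 / (4 / 9 * ((N : ℝ) - 1)))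
        - 1| < ε := by
  intro A hA ε hε
  suffices h : Tendsto (fun x : ℕ × ℕ => (∑' s : ℕ, Ptilde x.1 s (x.1 - x.2 + s))
      * √(4 / 9 * π * ((x.1 : ℝ) - 1))
      * exp (((x.2 : ℝ) - 2 / 3 * ((x.1 : ℝ) - 1)) ^ 2 / (4 / 9 * ((x.1 : ℝ) - 1))))
      (comap Prod.fst atTop
        ⊓ 𝓟 {x | |(x.2 : ℝ) - 2 / 3 * ((x.1 : ℝ) - 1)| ≤ A * √(2 / 9 * ((x.1 : ℝ) - 1))})
      (𝓝 1) from exists_forall_abs_sub_lt_of_tendsto h hε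
  have hwin := tendsto_pred_pred_binomialWindow (p := 2 / 3) hA.le
    (show (2 / 9 : ℝ) ≤ 1 by norm_num)
  refine ((tendsto_binomial_local_clt_add_const 1 (by norm_num) (by norm_num)).comp hwin).congr' ?_
  filter_upwards
    [hwin.eventually ((tendsto_snd_binomialWindow (by norm_num)).eventually_gt_atTop 0),
      hwin.eventually ((tendsto_fst_sub_snd_binomialWindow (by norm_num)).eventually_gt_atTop 0)]
    with x hk hkN
  simp only [Function.comp_apply] at hk hkN ⊢
  rw [tsum_Ptilde_eq (by omega) (by omega), Nat.cast_sub (by omega : 1 ≤ x.1),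
    Nat.cast_sub (by omega : 1 ≤ x.2), show x.1 - 1 - (x.2 - 1) = x.1 - x.2 by omega, Nat.cast_one]
  ring_nf
end

section
/- For every integer N ≥ 1 and every integer h with 0 ≤ h ≤ N-1, one has Σ_{(s,t): t-s=h} P̃_N(s,t) = C(N-1, h) · (1/3)^{h} · (2/3)^{N-1-h}. In other words, the random variable n_b+n_r+n_{br} (the total length of dimers, equal to t-s) has the binomial distribution B(N-1, 1/3). -/
open Finset

/-!
For `h ≥ 1` the only nonzero terms are `1 ≤ s ≤ h`, and each equals
`(2/3)^(N-1) 2^(-h) C(N-h, s) C(h-1, h-s)`; Vandermonde's identity sums the binomials to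
`C(N-1, h)`, and `(2/3)^(N-1) 2^(-h) = (1/3)^h (2/3)^(N-1-h)`.
-/

lemma Ptilde_add_eq_zero_of_lt {N s h : ℕ} (hsh : h < s) : Ptilde N s (s + h) = 0 := by
  have hdiv : (s + h) / 2 < s := by omega
  simp only [Ptilde]
  rw [if_neg (by omega), if_neg (by omega)]

/-- The cases `s = 0` and `s + h > N`, where `Ptilde` vanishes, are covered because then
`C(h-1, h) = 0`, resp. `C(N-h, s) = 0` (also when `N - h` truncates to `0`). -/
lemma Ptilde_add_eq_of_le {N s h : ℕ} (hh : 1 ≤ h) (hsh : s ≤ h) :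
    Ptilde N s (s + h) =
      (2 / 3 : ℝ) ^ (N - 1) * (1 / 2 : ℝ) ^ h * ((N - h).choose s * (h - 1).choose (h - s)) := by
  simp only [Ptilde]
  rw [if_neg (by omega)]
  rcases Nat.eq_zero_or_pos s with rfl | hs
  · rw [if_neg (by omega), Nat.choose_eq_zero_of_lt (by omega : h - 1 < h - 0)]
    simp
  by_cases hN : s + h ≤ N
  · have hdiv : s ≤ (s + h) / 2 := by omega
    rw [if_pos ⟨hs, hdiv, by omega, hN⟩, show N - (s + h) + s = N - h by omega,
      Nat.add_sub_cancel_left, ← Nat.choose_symm (by omega : s - 1 ≤ h - 1),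
      show h - 1 - (s - 1) = h - s by omega]
    ring
  · rw [if_neg (by omega), Nat.choose_eq_zero_of_lt (by omega : N - h < s)]
    simp

lemma Nat.sum_range_choose_mul_choose (m n k : ℕ) :
    ∑ s ∈ range (k + 1), m.choose s * n.choose (k - s) = (m + n).choose k := by
  rw [Nat.add_choose_eq, Nat.sum_antidiagonal_eq_sum_range_succ_mk]

lemma two_thirds_pow_mul_half_pow {n h : ℕ} (hh : h ≤ n) :
    (2 / 3 : ℝ) ^ n * (1 / 2 : ℝ) ^ h = (1 / 3 : ℝ) ^ h * (2 / 3 : ℝ) ^ (n - h) := by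
  obtain ⟨k, rfl⟩ := Nat.exists_eq_add_of_le hh
  rw [Nat.add_sub_cancel_left, pow_add, show (1 / 3 : ℝ) = 2 / 3 * (1 / 2) by norm_num, mul_pow]
  ring

theorem total_length_binomial_general (N h : ℕ) (hh : h ≤ N - 1) :
    ∑' s : ℕ, Ptilde N s (s + h)
      = ((N - 1).choose h : ℝ) * (1 / 3 : ℝ) ^ h * (2 / 3 : ℝ) ^ (N - 1 - h) := by
  rw [tsum_eq_sum (s := range (h + 1)) fun s hs =>
    Ptilde_add_eq_zero_of_lt (by simpa using hs)]
  rcases Nat.eq_zero_or_pos h with rfl | hpos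
  · simp [Ptilde]
  rw [sum_congr rfl fun s hs => Ptilde_add_eq_of_le hpos (mem_range_succ_iff.mp hs),
    ← mul_sum]
  have vandermonde : ∑ s ∈ range (h + 1), ((N - h).choose s * (h - 1).choose (h - s) : ℝ)
      = (N - 1).choose h := by
    rw [show N - 1 = (N - h) + (h - 1) by omega, ← Nat.sum_range_choose_mul_choose]
    push_cast
    rfl
  rw [vandermonde, two_thirds_pow_mul_half_pow hh]
  ring

/-- the total length of dimers `t - s` has the binomial
distribution `B(N-1, 1/3)`: the sum over all pairs `(s,t)` with `t - s = h`
(i.e. `t = s + h`) of `P̃_N(s,t)` equals `C(N-1,h)·(1/3)^h·(2/3)^{N-1-h}`. -/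
theorem total_length_binomial (N h : ℕ) (hN : 1 ≤ N) (hh : h ≤ N - 1) :
    ∑' s : ℕ, Ptilde N s (s + h)
      = ((N - 1).choose h : ℝ) * (1 / 3 : ℝ) ^ h * (2 / 3 : ℝ) ^ (N - 1 - h) :=
  total_length_binomial_general N h hh
end

section
/- For every integer N ≥ 1, the mean total length of dimers equals (N-1)/3 exactly: Σ_{t=1}^{N} Σ_{s=1}^{⌊t/2⌋} (t-s) · P̃_N(s,t) = (N-1)/3. -/
/-!
Write `k = t - s` for the total dimer length and `s` for the number of dimers. After this change
of variables the inner sum over `s` is a Vandermonde convolution,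
`∑ₛ C(N-k, s) C(k-1, k-s) = C(N-1, k)`, so the mean is
`(2/3)^(N-1) ∑ₖ k C(N-1, k) 2^(-k) = (2/3)^(N-1) · (N-1)/2 · (3/2)^(N-2) = (N-1)/3`.
-/

open Finset

theorem sum_range_mul_choose_mul_pow {R : Type*} [CommSemiring R] (n : ℕ) (x : R) :
    ∑ k ∈ range (n + 1), (k : R) * n.choose k * x ^ k = n * x * (1 + x) ^ (n - 1) := by
  cases n with
  | zero => simp
  | succ m =>
    rw [sum_range_succ', Nat.add_sub_cancel, add_comm 1 x, add_pow, mul_sum]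
    simp only [Nat.cast_zero, zero_mul, add_zero, one_pow, mul_one]
    refine sum_congr rfl fun k _ => ?_
    have hk := congrArg (Nat.cast : ℕ → R) (Nat.add_one_mul_choose_eq m k)
    push_cast at hk
    calc ((k + 1 : ℕ) : R) * (m + 1).choose (k + 1) * x ^ (k + 1)
        = x ^ (k + 1) * ((m + 1).choose (k + 1) * (k + 1)) := by push_cast; ring
      _ = x ^ (k + 1) * (((m : R) + 1) * m.choose k) := by rw [hk]
      _ = _ := by push_cast; ring

theorem Nat.sum_range_choose_mul_choose_sub (m n k : ℕ) :
    ∑ i ∈ range (k + 1), m.choose i * n.choose (k - i) = (m + n).choose k := by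
  rw [Nat.add_choose_eq, Nat.sum_antidiagonal_eq_sum_range_succ_mk]

/-- The bijection is `(t, s) ↦ (t - s, s)`. -/
theorem sum_Icc_sum_Icc_half_eq_sum_range {M : Type*} [AddCommMonoid M] (N : ℕ)
    (F : ℕ → ℕ → M) (hF : ∀ k i, i ≤ k → F k i ≠ 0 → 1 ≤ i ∧ k + i ≤ N) :
    ∑ t ∈ Icc 1 N, ∑ s ∈ Icc 1 (t / 2), F (t - s) s
      = ∑ k ∈ range N, ∑ i ∈ range (k + 1), F k i := by
  rw [sum_sigma', sum_sigma']
  refine sum_bij_ne_zero (fun p _ _ => ⟨p.1 - p.2, p.2⟩) ?_ ?_ ?_ fun _ _ _ => rfl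
  · rintro ⟨t, s⟩ hts -
    simp only [mem_sigma, mem_Icc, mem_range] at hts ⊢
    omega
  · rintro ⟨t, s⟩ hts - ⟨t', s'⟩ hts' - h
    simp only [mem_sigma, mem_Icc, Sigma.mk.injEq, heq_eq_eq] at hts hts' h ⊢
    omega
  · rintro ⟨k, i⟩ hki hF0
    simp only [mem_sigma, mem_range] at hki
    obtain ⟨hi, hkiN⟩ := hF k i (by omega) hF0
    refine ⟨⟨k + i, i⟩, ?_, by simpa using hF0, by simp⟩
    simp only [mem_sigma, mem_Icc]
    omega

/-- The weight of `s` dimers of total length `k`, without the factor `(2/3)^(N-1)`.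
It uses `C(k-1, k-s)` rather than the paper's `C(k-1, s-1)`: the two agree for `1 ≤ s ≤ k`, but
only the former vanishes at `s = 0` (where `s - 1` truncates to `0`). -/
noncomputable def lengthWeight (N k s : ℕ) : ℝ :=
  k * (N - k).choose s * (k - 1).choose (k - s) * (1 / 2 : ℝ) ^ k

theorem sub_mul_Ptilde {N s t : ℕ} (hs : 1 ≤ s) (hst : s ≤ t / 2) (htN : t ≤ N) :
    ((t : ℝ) - s) * Ptilde N s t = (2 / 3) ^ (N - 1) * lengthWeight N (t - s) s := by
  rw [Ptilde, if_neg (by omega), if_pos ⟨hs, hst, by omega, htN⟩, lengthWeight,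
    ← Nat.cast_sub (by omega), show N - t + s = N - (t - s) by omega,
    show t - s - s = t - s - 1 - (s - 1) by omega, Nat.choose_symm (by omega)]
  ring

theorem lengthWeight_ne_zero {N k s : ℕ} (hsk : s ≤ k) (h : lengthWeight N k s ≠ 0) :
    1 ≤ s ∧ k + s ≤ N := by
  simp only [lengthWeight, ne_eq, mul_eq_zero, Nat.cast_eq_zero, Nat.choose_eq_zero_iff,
    pow_eq_zero_iff', not_or] at h
  omega

theorem sum_lengthWeight {N k : ℕ} (hk : k < N) :
    ∑ s ∈ range (k + 1), lengthWeight N k s = k * (N - 1).choose k * (1 / 2 : ℝ) ^ k := by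
  rcases Nat.eq_zero_or_pos k with rfl | hk0
  · simp [lengthWeight]
  rw [show N - 1 = N - k + (k - 1) by omega, ← Nat.sum_range_choose_mul_choose_sub,
    Nat.cast_sum, mul_sum, sum_mul]
  refine sum_congr rfl fun s _ => ?_
  simp only [lengthWeight]
  push_cast
  ring

/-- the mean total length of dimers equals `(N-1)/3` exactly. -/
theorem mean_total_length (N : ℕ) (hN : 1 ≤ N) :
    ∑ t ∈ Finset.Icc 1 N, ∑ s ∈ Finset.Icc 1 (t / 2),
        (((t : ℝ) - (s : ℝ)) * Ptilde N s t)
      = ((N : ℝ) - 1) / 3 := by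
  obtain ⟨n, rfl⟩ : ∃ n, N = n + 1 := ⟨N - 1, by omega⟩
  calc ∑ t ∈ Icc 1 (n + 1), ∑ s ∈ Icc 1 (t / 2), ((t : ℝ) - s) * Ptilde (n + 1) s t
      = (2 / 3) ^ n *
          ∑ t ∈ Icc 1 (n + 1), ∑ s ∈ Icc 1 (t / 2), lengthWeight (n + 1) (t - s) s := by
        simp only [mul_sum]
        refine sum_congr rfl fun t ht => sum_congr rfl fun s hs => ?_
        simp only [mem_Icc] at ht hs
        exact sub_mul_Ptilde hs.1 hs.2 ht.2
    _ = (2 / 3) ^ n * ∑ k ∈ range (n + 1), (k : ℝ) * n.choose k * (1 / 2) ^ k := by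
        rw [sum_Icc_sum_Icc_half_eq_sum_range _ _ fun k s hsk => lengthWeight_ne_zero hsk]
        exact congrArg _ (sum_congr rfl fun k hk => sum_lengthWeight (mem_range.1 hk))
    _ = ((n + 1 : ℕ) - 1) / 3 := by
        rw [sum_range_mul_choose_mul_pow]
        rcases n with _ | m
        · simp
        have h : (2 / 3 : ℝ) ^ m * (3 / 2) ^ m = 1 := by rw [← mul_pow]; norm_num
        push_cast
        rw [show (1 : ℝ) + 1 / 2 = 3 / 2 by norm_num]
        linear_combination ((m : ℝ) + 1) / 3 * h
end

section
/- The mean number of single points (sites not occupied by dimers) is asymptotically (4/9)(N+1): lim_{N→∞} [ Γ_N - (4/9)(N+1) ] = 0, where Γ_N := N·(2/3)^{N-1} + Σ_{t=1}^{N} Σ_{s=1}^{⌊t/2⌋} (N-t) · P̃_N(s,t). In particular, to first order in N, the expected number of single points is asymptotically twice the expected number of dimers. -/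
/-! Put `N = m + t + 2`, with `m` single points and `t + 2` sites covered by dimers. Up to the
factor `(2/3)^(N-1)`, the `s`-sum of `P̃_N(s, t + 2)` is `dimerWeight m t`. Pascal's rule in `m`
and in `t` yields two recurrences for these weights, and summing them along the antidiagonals
`m + t = n` gives first order recurrences solved by `Σ w = (3/2)^(n+1) - 1` and
`Σ m w = (2/3)(n+3)(3/2)^n - (n+2)`. Hence `Γ_N = (4/9)(N+1)` exactly for `N ≥ 2`. -/

open Finset

namespace HardDimer

section DiagSum

variable {M : Type*} [AddCommMonoid M]

def diagSum (f : ℕ → ℕ → M) (n : ℕ) : M := ∑ p ∈ antidiagonal n, f p.1 p.2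

theorem diagSum_succ (f : ℕ → ℕ → M) (n : ℕ) :
    diagSum f (n + 1) = f 0 (n + 1) + diagSum (fun i j => f (i + 1) j) n :=
  Nat.sum_antidiagonal_succ

theorem diagSum_succ' (f : ℕ → ℕ → M) (n : ℕ) :
    diagSum f (n + 1) = f (n + 1) 0 + diagSum (fun i j => f i (j + 1)) n :=
  Nat.sum_antidiagonal_succ'

theorem diagSum_eq_sum_range (f : ℕ → ℕ → M) (n : ℕ) :
    diagSum f n = ∑ k ∈ range (n + 1), f k (n - k) :=
  Nat.sum_antidiagonal_eq_sum_range_succ f n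

theorem diagSum_eq_sum_range' (f : ℕ → ℕ → M) (n : ℕ) :
    diagSum f n = ∑ k ∈ range (n + 1), f (n - k) k := by
  rw [diagSum, ← Nat.sum_antidiagonal_swap]
  exact Nat.sum_antidiagonal_eq_sum_range_succ (fun i j => f j i) n

theorem diagSum_add (f g : ℕ → ℕ → M) (n : ℕ) :
    diagSum (fun i j => f i j + g i j) n = diagSum f n + diagSum g n :=
  sum_add_distrib

theorem diagSum_const_mul {R : Type*} [NonUnitalNonAssocSemiring R] (c : R) (f : ℕ → ℕ → R)
    (n : ℕ) : diagSum (fun i j => c * f i j) n = c * diagSum f n :=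
  (mul_sum _ _ _).symm

end DiagSum

/-- The summand at `(i, j)` is that of `P̃_{m+t+2}(s, t + 2) / (2/3)^(m+t+1)` at `s = i + 1`, with
`j = t + 1 - s`; this indexing avoids truncated subtraction. -/
noncomputable def dimerWeight (m t : ℕ) : ℝ :=
  diagSum (fun i j => ((m + i + 1).choose (i + 1) : ℝ) * (j.choose i : ℝ) * (1 / 2) ^ (j + 1)) t

noncomputable def dimerWeightDiff (m t : ℕ) : ℝ :=
  diagSum (fun i j => ((m + i).choose i : ℝ) * (j.choose i : ℝ) * (1 / 2) ^ (j + 1)) t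

theorem dimerWeight_zero_left (t : ℕ) : dimerWeight 0 t = dimerWeightDiff 0 t := by
  simp [dimerWeight, dimerWeightDiff, Nat.choose_self]

theorem dimerWeight_succ (m t : ℕ) :
    dimerWeight (m + 1) t = dimerWeight m t + dimerWeightDiff (m + 1) t := by
  rw [dimerWeight, dimerWeight, dimerWeightDiff, ← diagSum_add]
  congr 1
  ext i j
  rw [show m + 1 + i + 1 = (m + i + 1) + 1 by ring, Nat.choose_succ_succ', add_right_comm m 1 i]
  push_cast
  ring

theorem dimerWeightDiff_zero_right (m : ℕ) : dimerWeightDiff m 0 = 1 / 2 := by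
  simp [dimerWeightDiff, diagSum]

theorem dimerWeightDiff_one_right (m : ℕ) : dimerWeightDiff m 1 = 1 / 4 := by
  rw [dimerWeightDiff, diagSum_succ]
  norm_num [diagSum]

theorem dimerWeightDiff_add_two (m t : ℕ) :
    dimerWeightDiff m (t + 2) = (dimerWeightDiff m (t + 1) + dimerWeight m t) / 2 := by
  have pascal : 2 * diagSum (fun i j => ((m + (i + 1)).choose (i + 1) : ℝ) *
        ((j + 1).choose (i + 1) : ℝ) * (1 / 2) ^ (j + 1 + 1)) t =
      diagSum (fun i j => ((m + (i + 1)).choose (i + 1) : ℝ) *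
        (j.choose (i + 1) : ℝ) * (1 / 2) ^ (j + 1)) t + dimerWeight m t := by
    rw [dimerWeight, ← diagSum_add, ← diagSum_const_mul]
    congr 1
    ext i j
    rw [Nat.choose_succ_succ', ← add_assoc]
    push_cast
    ring
  rw [dimerWeightDiff, dimerWeightDiff, diagSum_succ', diagSum_succ, diagSum_succ (n := t)]
  simp only [Nat.choose_zero_right, Nat.choose_eq_zero_of_lt (Nat.succ_pos _), add_zero]
  push_cast
  linear_combination pascal / 2

theorem diagSum_weighted_dimerWeight_succ (w : ℕ → ℝ) (n : ℕ) :
    diagSum (fun m t => w m * dimerWeight m t) (n + 1) =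
      diagSum (fun m t => w (m + 1) * dimerWeight m t) n +
        diagSum (fun m t => w m * dimerWeightDiff m t) (n + 1) := by
  rw [diagSum_succ, diagSum_succ (fun m t => w m * dimerWeightDiff m t), dimerWeight_zero_left]
  simp only [dimerWeight_succ, mul_add, diagSum_add]
  ring

theorem diagSum_weighted_dimerWeightDiff_add_two (w : ℕ → ℝ) (n : ℕ) :
    diagSum (fun m t => w m * dimerWeightDiff m t) (n + 2) =
      (w (n + 2) + diagSum (fun m t => w m * dimerWeightDiff m t) (n + 1) +
        diagSum (fun m t => w m * dimerWeight m t) n) / 2 := by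
  have split : 2 * diagSum (fun m t => w m * dimerWeightDiff m (t + 2)) n =
      diagSum (fun m t => w m * dimerWeightDiff m (t + 1)) n +
        diagSum (fun m t => w m * dimerWeight m t) n := by
    rw [← diagSum_add, ← diagSum_const_mul]
    congr 1
    ext m t
    rw [dimerWeightDiff_add_two]
    ring
  rw [diagSum_succ', diagSum_succ', diagSum_succ' _ n]
  simp only [zero_add, dimerWeightDiff_zero_right, dimerWeightDiff_one_right]
  linear_combination split / 2

theorem diagSum_dimerWeight_and_diff (n : ℕ) :
    diagSum dimerWeight n = (3 / 2) ^ (n + 1) - 1 ∧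
      diagSum dimerWeightDiff (n + 1) = (3 / 2) ^ (n + 2) / 3 := by
  have hw := diagSum_weighted_dimerWeight_succ fun _ => 1
  have hd := diagSum_weighted_dimerWeightDiff_add_two fun _ => 1
  simp only [one_mul] at hw hd
  induction n with
  | zero =>
    rw [diagSum_succ]
    norm_num [diagSum, dimerWeight, dimerWeightDiff_zero_right, dimerWeightDiff_one_right]
  | succ n ih =>
    obtain ⟨hA, hD⟩ := ih
    exact ⟨by rw [hw, hA, hD]; ring, by rw [hd, hA, hD]; ring⟩

theorem diagSum_mul_dimerWeight_and_diff (n : ℕ) :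
    diagSum (fun m t => (m : ℝ) * dimerWeight m t) n = 2 / 3 * (n + 3) * (3 / 2) ^ n - (n + 2) ∧
      diagSum (fun m t => (m : ℝ) * dimerWeightDiff m t) (n + 1) =
        (2 * n + 3) / 6 * (3 / 2) ^ n := by
  have hw := diagSum_weighted_dimerWeight_succ fun m => (m : ℝ)
  have hd := diagSum_weighted_dimerWeightDiff_add_two fun m => (m : ℝ)
  simp only [Nat.cast_add, Nat.cast_one, add_one_mul, diagSum_add] at hw hd
  induction n with
  | zero =>
    rw [diagSum_succ]
    norm_num [diagSum, dimerWeightDiff_zero_right]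
  | succ n ih =>
    obtain ⟨hC, hH⟩ := ih
    have hA := (diagSum_dimerWeight_and_diff n).1
    exact ⟨by rw [hw, hC, hH, hA]; push_cast; ring, by rw [hd, hC, hH]; push_cast; ring⟩

theorem sum_choose_eq_dimerWeight (m u : ℕ) :
    ∑ s ∈ Icc 1 ((u + 2) / 2), ((m + s).choose s : ℝ) * ((u + 2 - s - 1).choose (s - 1) : ℝ) *
      (1 / 2) ^ (u + 2 - s) = dimerWeight m u := by
  rw [← Ico_add_one_right_eq_Icc, sum_Ico_eq_sum_range, add_tsub_cancel_right, dimerWeight,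
    diagSum_eq_sum_range]
  have vanish : ∀ k ∈ range (u + 1), k ∉ range ((u + 2) / 2) →
      ((m + k + 1).choose (k + 1) : ℝ) * ((u - k).choose k : ℝ) * (1 / 2) ^ (u - k + 1) = 0 := by
    intro k _ hk
    rw [mem_range, not_lt] at hk
    rw [Nat.choose_eq_zero_of_lt (show u - k < k by omega)]
    simp
  rw [← sum_subset (range_subset_range.2 (by omega)) vanish]
  refine sum_congr rfl fun k hk => ?_
  rw [mem_range] at hk
  rw [show u + 2 - (1 + k) - 1 = u - k by omega, show u + 2 - (1 + k) = u - k + 1 by omega,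
    add_tsub_cancel_left, add_comm 1 k, ← add_assoc]

theorem sum_mul_Ptilde_eq (n : ℕ) :
    ∑ t ∈ Icc 1 (n + 2), ∑ s ∈ Icc 1 (t / 2), (((n + 2 : ℕ) : ℝ) - t) * Ptilde (n + 2) s t =
      (2 / 3) ^ (n + 1) * diagSum (fun m t => (m : ℝ) * dimerWeight m t) n := by
  have hsub : Icc 1 (n + 2) ⊆ range (n + 3) := fun t ht => by
    rw [mem_Icc] at ht
    rw [mem_range]
    omega
  rw [sum_subset hsub fun t hrange hIcc => ?_]
  · rw [sum_range_succ', sum_range_succ', diagSum_eq_sum_range', mul_sum]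
    simp only [zero_add, Nat.reduceDiv, Icc_eq_empty_of_lt zero_lt_one, sum_empty, add_zero]
    refine sum_congr rfl fun u hu => ?_
    rw [mem_range, Nat.lt_succ_iff] at hu
    rw [← sum_choose_eq_dimerWeight, mul_sum, mul_sum]
    refine sum_congr rfl fun s hs => ?_
    rw [mem_Icc] at hs
    rw [Ptilde, if_neg (by omega), if_pos (by omega), show n + 2 - (u + 1 + 1) = n - u by omega,
      show n + 2 - 1 = n + 1 by omega, Nat.cast_sub hu]
    push_cast
    ring
  · obtain rfl : t = 0 := by rw [mem_range] at hrange; rw [mem_Icc] at hIcc; omega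
    simp

end HardDimer

open HardDimer

/-- the mean number of single points
`Γ_N := N·(2/3)^{N-1} + Σ_{t=1}^{N} Σ_{s=1}^{⌊t/2⌋} (N-t)·P̃_N(s,t)`
is asymptotically `(4/9)(N+1)`. -/
theorem single_points_mean_asymptotics :
    Filter.Tendsto
      (fun N : ℕ =>
        ((N : ℝ) * (2 / 3 : ℝ) ^ (N - 1)
            + ∑ t ∈ Finset.Icc 1 N, ∑ s ∈ Finset.Icc 1 (t / 2),
                ((N : ℝ) - (t : ℝ)) * Ptilde N s t)
          - 4 / 9 * ((N : ℝ) + 1))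
      Filter.atTop (nhds 0) := by
  rw [← Filter.tendsto_add_atTop_iff_nat 2]
  refine tendsto_const_nhds.congr fun n => ?_
  rw [sum_mul_Ptilde_eq, (diagSum_mul_dimerWeight_and_diff n).1, Nat.add_succ_sub_one]
  have h : (2 / 3 : ℝ) ^ n * (3 / 2) ^ n = 1 := by rw [← mul_pow]; norm_num
  push_cast
  linear_combination -(4 / 9 * (n + 3 : ℝ)) * h
end

section
/- The second factorial moment of the number of dimers is asymptotically (4/81)(N-1)(N-3): lim_{N→∞} [ Σ_{t=1}^{N} Σ_{s=1}^{⌊t/2⌋} s(s-1) · P̃_N(s,t) - (4/81)(N-1)(N-3) ] = 0. -/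
/-!
Writing `m = t - s`, the double sum becomes
`(2/3)^(N-1) ∑_m 2^(-m) ∑_s s(s-1) C(N-m, s) C(m-1, s-1)`. The inner sum is
`(N-m)(N-m-1) C(N-3, m-2)` by `s(s-1) C(n, s) = n(n-1) C(n-2, s-2)` and Vandermonde's identity,
and the outer sum is then a second derivative of the binomial theorem, evaluated at `1/2`.
The powers of `3/2` it produces cancel against `(2/3)^(N-1)`, so that
`F_N = (4/81)(N-1)(N-3)` exactly for `N ≥ 5`.
-/

open Finset

namespace Nat

theorem add_two_mul_add_one_mul_choose_add_two (n j : ℕ) :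
    (j + 2) * (j + 1) * (n + 2).choose (j + 2) = (n + 2) * (n + 1) * n.choose j := by
  have h₁ : (n + 1) * n.choose j = (n + 1).choose (j + 1) * (j + 1) :=
    add_one_mul_choose_eq n j
  have h₂ : (n + 2) * (n + 1).choose (j + 1) = (n + 2).choose (j + 2) * (j + 2) :=
    add_one_mul_choose_eq (n + 1) (j + 1)
  calc (j + 2) * (j + 1) * (n + 2).choose (j + 2)
      = (n + 2) * ((n + 1).choose (j + 1) * (j + 1)) := by rw [← mul_assoc, h₂]; ring
    _ = (n + 2) * (n + 1) * n.choose j := by rw [← h₁]; ring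

theorem sum_range_choose_mul_choose_add_one (a b : ℕ) :
    ∑ j ∈ range (a + 1), a.choose j * (b + 1).choose (j + 1) = (a + b + 1).choose b := by
  set f := fun j => a.choose j * (b + 1).choose (j + 1)
  have hfa : ∀ j ≥ a + 1, f j = 0 := fun j hj => by simp [f, choose_eq_zero_of_lt hj]
  have hfb : ∀ j ≥ b + 1, f j = 0 := fun j hj => by
    simp [f, choose_eq_zero_of_lt (by omega : b + 1 < j + 1)]
  rw [← eventually_constant_sum hfa (n := a + b + 1) (by omega),
    eventually_constant_sum hfb (by omega), add_assoc, add_choose_eq,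
    Nat.sum_antidiagonal_eq_sum_range_succ (fun i j => a.choose i * (b + 1).choose j)]
  refine sum_congr rfl fun j hj => ?_
  rw [choose_symm_of_eq_add (by simp only [mem_range] at hj; omega : b + 1 = (b - j) + (j + 1))]

theorem sum_range_mul_sub_one_mul_choose_mul_choose (n k : ℕ) :
    ∑ s ∈ range (n + 1), s * (s - 1) * n.choose s * (k + 1).choose (s - 1) =
      n * (n - 1) * (n + k - 1).choose k := by
  obtain _ | _ | a := n
  · simp
  · simp [sum_range_succ]
  · rw [sum_range_succ', sum_range_succ']
    simp only [Nat.add_sub_cancel, add_two_mul_add_one_mul_choose_add_two]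
    rw [show a + 1 + 1 + k - 1 = a + k + 1 by omega]
    simp [mul_assoc, ← mul_sum, sum_range_choose_mul_choose_add_one]

theorem add_three_sub_mul_add_two_sub_mul_choose (c k : ℕ) :
    (c + 3 - k) * (c + 2 - k) * (c + 2).choose k =
      (c + 2) * ((c + 1) * c.choose k + 2 * (c + 1).choose k) := by
  rcases le_or_gt k (c + 1) with hk | hk
  · have h₁ : (c + 1).choose k * (c + 2) = (c + 2).choose k * (c + 2 - k) :=
      choose_mul_succ_eq (c + 1) k
    have h₂ : c.choose k * (c + 1) = (c + 1).choose k * (c + 1 - k) :=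
      choose_mul_succ_eq c k
    rw [show c + 2 - k = c + 1 - k + 1 by omega] at h₁ ⊢
    rw [show c + 3 - k = c + 1 - k + 2 by omega]
    generalize c + 1 - k = d at h₁ h₂ ⊢
    calc (d + 2) * (d + 1) * (c + 2).choose k = (d + 2) * ((c + 2).choose k * (d + 1)) := by
          ring
      _ = (c + 2) * ((c + 1).choose k * d + 2 * (c + 1).choose k) := by rw [← h₁]; ring
      _ = (c + 2) * ((c + 1) * c.choose k + 2 * (c + 1).choose k) := by rw [← h₂]; ring
  · rw [choose_eq_zero_of_lt hk, choose_eq_zero_of_lt (by omega : c < k),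
      show c + 2 - k = 0 by omega]
    simp

end Nat

theorem sum_range_choose_mul_pow_of_lt {R : Type*} [CommSemiring R] (x : R) {n K : ℕ}
    (h : n < K) : ∑ k ∈ range K, (n.choose k : R) * x ^ k = (1 + x) ^ n := by
  rw [eventually_constant_sum (fun k hk => by simp [Nat.choose_eq_zero_of_lt hk]) h,
    add_comm, add_pow]
  simp [mul_comm]

theorem sum_range_sub_mul_sub_mul_choose_mul_pow {R : Type*} [CommSemiring R] (x : R)
    (c : ℕ) {K : ℕ} (hK : c + 1 < K) :
    ∑ k ∈ range K, (((c + 3 - k) * (c + 2 - k) * (c + 2).choose k : ℕ) : R) * x ^ k =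
      (c + 2) * ((c + 1) * (1 + x) ^ c + 2 * (1 + x) ^ (c + 1)) := by
  simp only [Nat.add_three_sub_mul_add_two_sub_mul_choose]
  push_cast
  simp only [add_mul, mul_assoc, sum_add_distrib, ← mul_sum,
    sum_range_choose_mul_pow_of_lt x hK, sum_range_choose_mul_pow_of_lt x (by omega : c < K)]

theorem sum_Icc_sum_Icc_half_eq_sum_range_sum_range {M : Type*} [AddCommMonoid M] (N : ℕ)
    (f : ℕ → ℕ → M) (hf : ∀ s m, s = 0 ∨ m < s → f s m = 0) :
    ∑ t ∈ Icc 1 N, ∑ s ∈ Icc 1 (t / 2), f s (t - s) =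
      ∑ m ∈ range (N + 1), ∑ s ∈ range (N + 1 - m), f s m := by
  have hinner : ∀ t, ∑ s ∈ Icc 1 (t / 2), f s (t - s) = ∑ s ∈ range (t + 1), f s (t - s) := by
    intro t
    refine sum_subset (fun s hs => ?_) (fun s hs hs' => hf _ _ ?_)
    · simp only [mem_Icc, mem_range] at hs ⊢; omega
    · simp only [mem_Icc, mem_range, not_and, not_le] at hs hs'; omega
  have houter : ∑ t ∈ Icc 1 N, ∑ s ∈ range (t + 1), f s (t - s) =
      ∑ t ∈ range (N + 1), ∑ s ∈ range (t + 1), f s (t - s) := by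
    refine sum_subset (fun t ht => ?_) (fun t ht ht' => ?_)
    · simp only [mem_Icc, mem_range] at ht ⊢; omega
    · obtain rfl : t = 0 := by simp only [mem_Icc, mem_range, not_and, not_le] at ht ht'; omega
      simp [hf 0 0 (Or.inl rfl)]
  simp_rw [hinner]
  rw [houter, ← sum_range_diag_flip]
  refine sum_congr rfl fun t _ => ?_
  rw [← sum_range_reflect]
  refine sum_congr rfl fun s hs => ?_
  simp only [mem_range] at hs
  rw [show t + 1 - 1 - s = t - s by omega, show t - (t - s) = s by omega]

/-- `s (s - 1) P̃_N(s, t)` in the variables `s` and `m = t - s`, without the factors `(2/3)^(N-1)`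
and `2^(-m)`. -/
def dimerWeight (N s m : ℕ) : ℕ :=
  s * (s - 1) * (N - m).choose s * (m - 1).choose (s - 1)

theorem dimerWeight_eq_zero {N s m : ℕ} (h : s < 2 ∨ m < s) : dimerWeight N s m = 0 := by
  rcases Nat.lt_or_ge s 2 with hs | hs
  · interval_cases s <;> simp [dimerWeight]
  · simp [dimerWeight, Nat.choose_eq_zero_of_lt (by omega : m - 1 < s - 1)]

theorem mul_sub_one_mul_Ptilde {N s t : ℕ} (hs : 1 ≤ s ∧ s ≤ t / 2) (ht : t ≤ N) :
    (s : ℝ) * ((s : ℝ) - 1) * Ptilde N s t =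
      (2 / 3 : ℝ) ^ (N - 1) * ((1 / 2 : ℝ) ^ (t - s) * dimerWeight N s (t - s)) := by
  rw [Ptilde, if_neg (by omega), if_pos ⟨hs.1, hs.2, by omega, ht⟩, dimerWeight,
    show N - (t - s) = N - t + s by omega]
  push_cast [Nat.cast_sub hs.1]
  ring

theorem sum_range_dimerWeight (N : ℕ) {m : ℕ} (hm : 2 ≤ m) :
    ∑ s ∈ range (N + 1 - m), dimerWeight N s m =
      (N - m) * (N - m - 1) * (N - 3).choose (m - 2) := by
  obtain ⟨k, rfl⟩ : ∃ k, m = k + 2 := ⟨m - 2, by omega⟩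
  rcases le_or_gt (k + 2) N with hN | hN
  · obtain ⟨n, rfl⟩ : ∃ n, N = n + k + 2 := ⟨N - (k + 2), by omega⟩
    rw [show n + k + 2 - 3 = n + k - 1 by omega, show n + k + 2 + 1 - (k + 2) = n + 1 by omega,
      Nat.add_sub_cancel, show n + k + 2 - (k + 2) = n by omega,
      ← Nat.sum_range_mul_sub_one_mul_choose_mul_choose n k]
    refine sum_congr rfl fun s _ => ?_
    rw [dimerWeight, show n + k + 2 - (k + 2) = n by omega]
    rfl
  · rw [show N + 1 - (k + 2) = 0 by omega, show N - (k + 2) = 0 by omega]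
    simp

theorem sum_range_pow_mul_sum_range_dimerWeight {R : Type*} [CommSemiring R] (x : R) (c : ℕ) :
    ∑ m ∈ range (c + 5 + 1),
        x ^ m * ((∑ s ∈ range (c + 5 + 1 - m), dimerWeight (c + 5) s m : ℕ) : R) =
      x ^ 2 * ((c + 2) * ((c + 1) * (1 + x) ^ c + 2 * (1 + x) ^ (c + 1))) := by
  have hlow : ∀ m < 2, ∀ s, dimerWeight (c + 5) s m = 0 :=
    fun m hm s => dimerWeight_eq_zero (by omega)
  have hinner : ∀ k, ∑ s ∈ range (c + 5 + 1 - (k + 2)), dimerWeight (c + 5) s (k + 2) =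
      (c + 3 - k) * (c + 2 - k) * (c + 2).choose k := by
    intro k
    rw [sum_range_dimerWeight _ (by omega), show c + 5 - (k + 2) = c + 3 - k by omega,
      show c + 3 - k - 1 = c + 2 - k by omega]
    rfl
  have hshift : ∀ (k n : ℕ), x ^ (k + 2) * n = x ^ 2 * (n * x ^ k) := fun k n => by ring
  rw [sum_range_succ', sum_range_succ']
  simp only [zero_add, hlow 1 one_lt_two, hlow 0 two_pos, sum_const_zero, Nat.cast_zero,
    mul_zero, add_zero, hinner, hshift, ← mul_sum]
  rw [sum_range_sub_mul_sub_mul_choose_mul_pow x c (by omega)]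

theorem sum_sum_mul_sub_one_mul_Ptilde {N : ℕ} (hN : 5 ≤ N) :
    ∑ t ∈ Icc 1 N, ∑ s ∈ Icc 1 (t / 2), (s : ℝ) * ((s : ℝ) - 1) * Ptilde N s t =
      4 / 81 * ((N : ℝ) - 1) * ((N : ℝ) - 3) := by
  obtain ⟨c, rfl⟩ : ∃ c, N = c + 5 := ⟨N - 5, by omega⟩
  have hweights : ∀ t ∈ Icc 1 (c + 5), ∀ s ∈ Icc 1 (t / 2),
      (s : ℝ) * ((s : ℝ) - 1) * Ptilde (c + 5) s t =
        (2 / 3 : ℝ) ^ (c + 4) * ((1 / 2 : ℝ) ^ (t - s) * dimerWeight (c + 5) s (t - s)) :=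
    fun t ht s hs => mul_sub_one_mul_Ptilde (by simp only [mem_Icc] at hs; omega)
      (by simp only [mem_Icc] at ht; omega)
  rw [sum_congr rfl fun t ht => sum_congr rfl (hweights t ht),
    sum_Icc_sum_Icc_half_eq_sum_range_sum_range (c + 5)
      (fun s m => (2 / 3 : ℝ) ^ (c + 4) * ((1 / 2 : ℝ) ^ m * dimerWeight (c + 5) s m))
      fun s m h => by simp [dimerWeight_eq_zero (by omega : s < 2 ∨ m < s)]]
  simp only [← mul_sum, ← Nat.cast_sum, sum_range_pow_mul_sum_range_dimerWeight]
  have hkey : (2 / 3 : ℝ) ^ c * (3 / 2 : ℝ) ^ c = 1 := by rw [← mul_pow]; norm_num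
  push_cast
  linear_combination (4 / 81 * ((c : ℝ) + 2) * ((c : ℝ) + 4)) * hkey

/-- the second factorial moment of the number of dimers is
asymptotically `(4/81)(N-1)(N-3)`. -/
theorem dimer_second_factorial_asymptotics :
    Filter.Tendsto
      (fun N : ℕ =>
        (∑ t ∈ Finset.Icc 1 N, ∑ s ∈ Finset.Icc 1 (t / 2),
            (s : ℝ) * ((s : ℝ) - 1) * Ptilde N s t)
          - 4 / 81 * ((N : ℝ) - 1) * ((N : ℝ) - 3))
      Filter.atTop (nhds 0) := by
  refine tendsto_const_nhds.congr' ?_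
  filter_upwards [Filter.eventually_ge_atTop 5] with N hN
  rw [sum_sum_mul_sub_one_mul_Ptilde hN, sub_self]
end

section
/- The variance of the number of dimers is asymptotically (2/81)(3N+1): lim_{N→∞} [ V_N - (2/81)(3N+1) ] = 0, where V_N := F_N + E_N - (E_N)², with E_N := Σ_{t=1}^{N} Σ_{s=1}^{⌊t/2⌋} s·P̃_N(s,t) and F_N := Σ_{t=1}^{N} Σ_{s=1}^{⌊t/2⌋} s(s-1)·P̃_N(s,t). In particular the distribution of the number of dimers is not asymptotically binomial, since its variance (2/27)N differs from (2/9)(7/9)N. -/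
/-- `E_N`: the mean number of dimers. -/
noncomputable def dimerMean (N : ℕ) : ℝ :=
  ∑ t ∈ Finset.Icc 1 N, ∑ s ∈ Finset.Icc 1 (t / 2), (s : ℝ) * Ptilde N s t

/-- `F_N`: the second factorial moment of the number of dimers. -/
noncomputable def dimerSecondFactorial (N : ℕ) : ℝ :=
  ∑ t ∈ Finset.Icc 1 N, ∑ s ∈ Finset.Icc 1 (t / 2), (s : ℝ) * ((s : ℝ) - 1) * Ptilde N s t

/-!
With `u = t - s`, the weight `P̃_N(s, s + u)` is `C(N-u, s) C(u-1, s-1) (1/3)^u (2/3)^(N-1-u)`.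
Since `s^(j) C(m, s) = m^(j) C(m-j, s-j)`, for fixed `u = j + v` the sum over `s` of the
falling factorial `s^(j)` against `C(N-u, s) C(u-1, s-1)` is a Vandermonde convolution; with
`N = n + j + 1` it equals `(n+1-v)^(j) C(n, v)`. Reflecting `v ↦ n - v` turns the `j`-th
factorial moment of the number of dimers into `(1/3)^j` times the `j`-th factorial moment of
`K + 1` for `K ~ Binomial(n, 2/3)`, which is `(2/3)^j n^(j) + j (2/3)^(j-1) n^(j-1)`.
Hence `E_N = (2N-1)/9` and `F_N = 4(N-1)(N-3)/81`, so `V_N = 2(3N+1)/81` exactly for `N ≥ 3`.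
-/

open Finset
namespace Nat

theorem descFactorial_mul_choose {n k j : ℕ} (h : j ≤ k) :
    k.descFactorial j * n.choose k = n.descFactorial j * (n - j).choose (k - j) := by
  rw [descFactorial_eq_factorial_mul_choose, descFactorial_eq_factorial_mul_choose, mul_assoc,
    mul_assoc, mul_comm (k.choose j), choose_mul h]

theorem add_one_descFactorial_add_one (v j : ℕ) :
    (v + 1).descFactorial (j + 1) = v.descFactorial (j + 1) + (j + 1) * v.descFactorial j := by
  rw [succ_descFactorial_succ, descFactorial_succ]
  rcases le_or_gt j v with h | h
  · rw [← add_mul]; congr 1; omega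
  · simp [descFactorial_eq_zero_iff_lt.mpr h]

theorem sum_range_choose_mul_choose_sub_s12 (a b v : ℕ) :
    ∑ r ∈ range (v + 1), a.choose r * b.choose (v - r) = (a + b).choose v := by
  rw [add_choose_eq, Finset.Nat.sum_antidiagonal_eq_sum_range_succ_mk]

theorem sum_range_descFactorial_mul_choose_mul_choose (m v i : ℕ) :
    ∑ s ∈ range (v + i + 2), s.descFactorial (i + 1) * (m.choose s * (v + i).choose (s - 1))
      = m.descFactorial (i + 1) * (m + v - 1).choose v := by
  rw [show v + i + 2 = (i + 1) + (v + 1) by omega, sum_range_add,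
    sum_eq_zero fun s hs => by rw [descFactorial_eq_zero_iff_lt.mpr (mem_range.mp hs), zero_mul],
    zero_add]
  have hterm : ∀ r ∈ range (v + 1),
      (i + 1 + r).descFactorial (i + 1) * (m.choose (i + 1 + r) * (v + i).choose (i + 1 + r - 1))
        = m.descFactorial (i + 1) * ((m - (i + 1)).choose r * (v + i).choose (v - r)) := by
    intro r hr
    rw [← mul_assoc, descFactorial_mul_choose (by omega), mul_assoc, Nat.add_sub_cancel_left,
      choose_symm_of_eq_add (by have := mem_range.mp hr; omega : v + i = i + 1 + r - 1 + (v - r))]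
  rw [sum_congr rfl hterm, ← mul_sum, sum_range_choose_mul_choose_sub_s12]
  rcases le_or_gt (i + 1) m with h | h
  · congr 2; omega
  · rw [descFactorial_eq_zero_iff_lt.mpr h, zero_mul, zero_mul]

end Nat

section BinomialMoments
variable {R : Type*} [CommSemiring R]

theorem sum_range_descFactorial_mul_choose_mul_pow_mul_pow (n j : ℕ) (x y : R) :
    ∑ k ∈ range (n + 1), ((k.descFactorial j * n.choose k : ℕ) : R) * x ^ k * y ^ (n - k)
      = n.descFactorial j * x ^ j * (x + y) ^ (n - j) := by
  rcases lt_or_ge n j with h | h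
  · rw [Nat.descFactorial_eq_zero_iff_lt.mpr h, sum_eq_zero fun k hk => by
      simp [Nat.descFactorial_eq_zero_iff_lt.mpr ((mem_range.mp hk).trans_le h)]]
    simp
  obtain ⟨m, rfl⟩ := Nat.exists_eq_add_of_le h
  rw [show j + m + 1 = j + (m + 1) by omega, sum_range_add,
    sum_eq_zero fun k hk => by simp [Nat.descFactorial_eq_zero_iff_lt.mpr (mem_range.mp hk)],
    zero_add, Nat.add_sub_cancel_left, add_pow, mul_sum]
  refine sum_congr rfl fun r hr => ?_
  rw [Nat.descFactorial_mul_choose (by omega), Nat.add_sub_cancel_left, Nat.add_sub_cancel_left,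
    show j + m - (j + r) = m - r by omega]
  push_cast
  ring

theorem sum_range_add_one_descFactorial_mul_choose_mul_pow_mul_pow (n j : ℕ) (x y : R) :
    ∑ k ∈ range (n + 1),
        (((k + 1).descFactorial (j + 1) * n.choose k : ℕ) : R) * x ^ k * y ^ (n - k)
      = n.descFactorial (j + 1) * x ^ (j + 1) * (x + y) ^ (n - (j + 1))
        + (j + 1) * n.descFactorial j * x ^ j * (x + y) ^ (n - j) := by
  have hterm : ∀ k, (((k + 1).descFactorial (j + 1) * n.choose k : ℕ) : R) * x ^ k * y ^ (n - k)
      = ((k.descFactorial (j + 1) * n.choose k : ℕ) : R) * x ^ k * y ^ (n - k)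
        + (j + 1) * (((k.descFactorial j * n.choose k : ℕ) : R) * x ^ k * y ^ (n - k)) := by
    intro k
    rw [Nat.add_one_descFactorial_add_one]
    push_cast
    ring
  rw [sum_congr rfl fun k _ => hterm k, sum_add_distrib, ← mul_sum,
    sum_range_descFactorial_mul_choose_mul_pow_mul_pow,
    sum_range_descFactorial_mul_choose_mul_pow_mul_pow]
  ring

end BinomialMoments

theorem Finset.sum_Icc_sum_Icc_div_two_sub {M : Type*} [AddCommMonoid M] (N : ℕ)
    (G : ℕ → ℕ → M) (hG : ∀ s u, 1 ≤ s → N < s + u → G s u = 0) :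
    ∑ t ∈ Icc 1 N, ∑ s ∈ Icc 1 (t / 2), G s (t - s)
      = ∑ u ∈ range N, ∑ s ∈ Icc 1 u, G s u := by
  have hvanish : ∀ p ∈ (range N).sigma (Icc 1 ·), G p.2 p.1 ≠ 0 → p.2 + p.1 ≤ N := by
    intro p hp h
    simp only [mem_sigma, mem_Icc] at hp
    exact not_lt.mp fun hN => h (hG p.2 p.1 hp.2.1 hN)
  rw [sum_sigma', sum_sigma', ← sum_filter_of_ne hvanish]
  refine sum_nbij' (fun p => ⟨p.1 - p.2, p.2⟩) (fun p => ⟨p.1 + p.2, p.2⟩) ?_ ?_ ?_ ?_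
    (fun _ _ => rfl) <;>
  rintro ⟨a, b⟩ hp <;>
  simp only [mem_filter, mem_sigma, mem_Icc, mem_range, Sigma.mk.injEq, heq_eq_eq,
    and_true] at hp ⊢ <;>
  omega

theorem Ptilde_eq_of_le {N s t : ℕ} (hs : 1 ≤ s) (hst : s ≤ t / 2) (ht : t ≤ N) :
    Ptilde N s t = ((N - (t - s)).choose s * (t - s - 1).choose (s - 1) : ℕ)
      * (1 / 3 : ℝ) ^ (t - s) * (2 / 3 : ℝ) ^ (N - 1 - (t - s)) := by
  have h2 : (2 / 3 : ℝ) ^ (N - 1) = (2 / 3) ^ (t - s) * (2 / 3) ^ (N - 1 - (t - s)) := by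
    rw [← pow_add]; congr 1; omega
  have h3 : (1 / 3 : ℝ) ^ (t - s) = (2 / 3) ^ (t - s) * (1 / 2) ^ (t - s) := by
    rw [← mul_pow]; norm_num
  rw [Ptilde, if_neg (by omega), if_pos (by omega), show N - t + s = N - (t - s) by omega, h2, h3]
  push_cast
  ring

theorem sum_mul_Ptilde (f : ℕ → ℝ) (N : ℕ) :
    ∑ t ∈ Icc 1 N, ∑ s ∈ Icc 1 (t / 2), f s * Ptilde N s t
      = ∑ u ∈ range N, ∑ s ∈ Icc 1 u,
          f s * ((N - u).choose s * (u - 1).choose (s - 1) : ℕ) * (1 / 3 : ℝ) ^ u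
            * (2 / 3 : ℝ) ^ (N - 1 - u) := by
  rw [← sum_Icc_sum_Icc_div_two_sub]
  · refine sum_congr rfl fun t ht => sum_congr rfl fun s hs => ?_
    rw [mem_Icc] at ht hs
    rw [Ptilde_eq_of_le hs.1 hs.2 ht.2]
    ring
  · intro s u hs h
    rw [Nat.choose_eq_zero_of_lt (by omega : N - u < s)]
    simp

noncomputable def dimerFactorialMoment (j N : ℕ) : ℝ :=
  ∑ t ∈ Icc 1 N, ∑ s ∈ Icc 1 (t / 2), (s.descFactorial j : ℝ) * Ptilde N s t

theorem dimerFactorialMoment_eq_sum_range (n i : ℕ) :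
    dimerFactorialMoment (i + 1) (n + i + 2)
      = (1 / 3 : ℝ) ^ (i + 1) * ∑ v ∈ range (n + 1),
          (((n + 1 - v).descFactorial (i + 1) * n.choose v : ℕ) : ℝ)
            * (1 / 3 : ℝ) ^ v * (2 / 3 : ℝ) ^ (n - v) := by
  set N := n + i + 2
  have hinner : ∀ u, ∑ s ∈ Icc 1 u, (s.descFactorial (i + 1) : ℝ)
        * ((N - u).choose s * (u - 1).choose (s - 1) : ℕ)
        * (1 / 3 : ℝ) ^ u * (2 / 3 : ℝ) ^ (N - 1 - u)
      = ((∑ s ∈ range (u + 1),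
          s.descFactorial (i + 1) * ((N - u).choose s * (u - 1).choose (s - 1)) : ℕ) : ℝ)
        * (1 / 3 : ℝ) ^ u * (2 / 3 : ℝ) ^ (N - 1 - u) := by
    intro u
    push_cast
    rw [sum_mul, sum_mul]
    refine sum_subset (fun s hs => ?_) fun s hs hs' => ?_
    · simp only [mem_Icc, mem_range] at hs ⊢
      omega
    · obtain rfl : s = 0 := by simp only [mem_Icc, mem_range] at hs hs'; omega
      simp
  have hhyper : ∀ v ∈ range (n + 1),
      ((∑ s ∈ range (i + 1 + v + 1),
          s.descFactorial (i + 1) * ((N - (i + 1 + v)).choose s * (i + 1 + v - 1).choose (s - 1))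
          : ℕ) : ℝ) * (1 / 3 : ℝ) ^ (i + 1 + v) * (2 / 3 : ℝ) ^ (N - 1 - (i + 1 + v))
        = (1 / 3 : ℝ) ^ (i + 1)
          * ((((n + 1 - v).descFactorial (i + 1) * n.choose v : ℕ) : ℝ)
            * (1 / 3 : ℝ) ^ v * (2 / 3 : ℝ) ^ (n - v)) := by
    intro v hv
    have hv : v ≤ n := Nat.lt_succ_iff.mp (mem_range.mp hv)
    rw [show i + 1 + v + 1 = v + i + 2 by omega, show i + 1 + v - 1 = v + i by omega,
      show N - (i + 1 + v) = n + 1 - v by omega, show N - 1 - (i + 1 + v) = n - v by omega,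
      Nat.sum_range_descFactorial_mul_choose_mul_choose, show n + 1 - v + v - 1 = n by omega,
      pow_add]
    ring
  have hlow : ∀ u ∈ range (i + 1),
      ((∑ s ∈ range (u + 1),
          s.descFactorial (i + 1) * ((N - u).choose s * (u - 1).choose (s - 1)) : ℕ) : ℝ)
        * (1 / 3 : ℝ) ^ u * (2 / 3 : ℝ) ^ (N - 1 - u) = 0 := by
    intro u hu
    rw [sum_eq_zero fun s hs => by
      rw [Nat.descFactorial_eq_zero_iff_lt.mpr (by grind), zero_mul]]
    simp
  rw [dimerFactorialMoment, sum_mul_Ptilde, sum_congr rfl fun u _ => hinner u,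
    show range N = range (i + 1 + (n + 1)) by congr 1; omega, sum_range_add, sum_eq_zero hlow,
    zero_add, sum_congr rfl hhyper, ← mul_sum]

theorem dimerFactorialMoment_eq (n i : ℕ) :
    dimerFactorialMoment (i + 1) (n + i + 2)
      = (1 / 3 : ℝ) ^ (i + 1) * (n.descFactorial (i + 1) * (2 / 3) ^ (i + 1)
          + (i + 1) * n.descFactorial i * (2 / 3) ^ i) := by
  have hreflect : ∀ v ∈ range (n + 1),
      (((n + 1 - (n + 1 - 1 - v)).descFactorial (i + 1) * n.choose (n + 1 - 1 - v) : ℕ) : ℝ)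
          * (1 / 3 : ℝ) ^ (n + 1 - 1 - v) * (2 / 3 : ℝ) ^ (n - (n + 1 - 1 - v))
        = (((v + 1).descFactorial (i + 1) * n.choose v : ℕ) : ℝ)
          * (2 / 3 : ℝ) ^ v * (1 / 3 : ℝ) ^ (n - v) := by
    intro v hv
    have hv : v ≤ n := Nat.lt_succ_iff.mp (mem_range.mp hv)
    rw [Nat.add_sub_cancel, show n + 1 - (n - v) = v + 1 by omega,
      show n - (n - v) = v by omega, Nat.choose_symm hv]
    ring
  rw [dimerFactorialMoment_eq_sum_range, ← sum_range_reflect, sum_congr rfl hreflect,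
    sum_range_add_one_descFactorial_mul_choose_mul_pow_mul_pow]
  norm_num

theorem dimerMean_eq_dimerFactorialMoment (N : ℕ) : dimerMean N = dimerFactorialMoment 1 N := by
  simp only [dimerMean, dimerFactorialMoment, Nat.descFactorial_one]

theorem dimerSecondFactorial_eq_dimerFactorialMoment (N : ℕ) :
    dimerSecondFactorial N = dimerFactorialMoment 2 N := by
  simp only [dimerSecondFactorial, dimerFactorialMoment, Nat.cast_descFactorial_two]

theorem dimerMean_add_two (n : ℕ) : dimerMean (n + 2) = (2 * n + 3) / 9 := by
  rw [dimerMean_eq_dimerFactorialMoment, dimerFactorialMoment_eq n 0]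
  norm_num
  ring

theorem dimerSecondFactorial_add_three (n : ℕ) :
    dimerSecondFactorial (n + 3) = 4 * n * (n + 2) / 81 := by
  rw [dimerSecondFactorial_eq_dimerFactorialMoment, dimerFactorialMoment_eq n 1,
    Nat.cast_descFactorial_two]
  norm_num
  ring

/-- the variance `V_N = F_N + E_N - E_N²` of the number of dimers
is asymptotically `(2/81)(3N+1)`. -/
theorem dimer_variance_asymptotics :
    Filter.Tendsto
      (fun N : ℕ =>
        (dimerSecondFactorial N + dimerMean N - (dimerMean N) ^ 2)
          - 2 / 81 * (3 * (N : ℝ) + 1))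
      Filter.atTop (nhds 0) := by
  refine tendsto_const_nhds.congr' ?_
  filter_upwards [Filter.eventually_ge_atTop 3] with N hN
  obtain ⟨n, rfl⟩ := Nat.exists_eq_add_of_le' hN
  rw [dimerSecondFactorial_add_three, show n + 3 = (n + 1) + 2 from rfl, dimerMean_add_two]
  push_cast
  ring
end
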